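/- arXiv:2306.16378 — 4 statements merged into one kernel-verified Lean document; each statement's English description precedes it below -/
import Mathlib

section
/- Let q ≥ 1, s > 0, d ≥ 1, and set τ_q(s) = s/d + 1/2 - 1/q. Suppose u_ℓ = κ^{-1/q} ℓ^{-τ_q(s)} ξ_ℓ where the ξ_ℓ are i.i.d. real random variables with density proportional to exp(-|x|^q/2). Then for every s' < s - d/q, the expected value of Σ_{ℓ=1}^∞ ℓ^{τ_q(s')·q} |u_ℓ|^q is finite. -/
open MeasureTheory ENNReal

/-- The weight exponent `τ_q(s) = s/d + 1/2 - 1/q`. -/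
noncomputable def tauExp (q s d : ℝ) : ℝ := s / d + 1 / 2 - 1 / q

/-- A Besov random draw `u_ℓ = κ^{-1/q} ℓ^{-τ_q(s)} ξ_ℓ`, with `ξ_ℓ` i.i.d. with density
proportional to `exp(-|x|^q/2)`, has finite expected `B^{s',q}` (sequence) norm to the `q`-th
power whenever `s' < s - d/q`. -/
theorem stmt0
    {Ω : Type*} [MeasurableSpace Ω] (P : Measure Ω) [IsProbabilityMeasure P]
    (q s d κ : ℝ) (hq : 1 ≤ q) (hs : 0 < s) (hd : 1 ≤ d) (hκ : 0 < κ)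
    (ξ : ℕ → Ω → ℝ) (hmeas : ∀ ℓ, Measurable (ξ ℓ)) (c : ℝ≥0∞)
    (hlaw : ∀ ℓ, Measure.map (ξ ℓ) P
      = c • (volume.withDensity fun x : ℝ => ENNReal.ofReal (Real.exp (-(|x| ^ q) / 2))))
    (u : ℕ → Ω → ℝ)
    (hu : ∀ ℓ ω, u ℓ ω = κ ^ (-(1 / q)) * ((ℓ : ℝ) + 1) ^ (-(tauExp q s d)) * ξ ℓ ω)
    (s' : ℝ) (hs' : s' < s - d / q) :
    ∫⁻ ω, (∑' ℓ : ℕ, ENNReal.ofReal (((ℓ : ℝ) + 1) ^ (tauExp q s' d * q) * |u ℓ ω| ^ q)) ∂P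
      < ⊤ := by
  have hq0 : (0 : ℝ) < q := lt_of_lt_of_le one_pos hq
  have hd0 : (0 : ℝ) < d := lt_of_lt_of_le one_pos hd
  set τ : ℝ := tauExp q s d with hτ
  set τ' : ℝ := tauExp q s' d with hτ'
  set e : ℝ := τ' * q - τ * q with he
  -- the exponent `e` is < -1
  have he1 : e < -1 := by
    have h1 : d / q < s - s' := by linarith
    have h2 : d < (s - s') * q := by
      have := (div_lt_iff₀ hq0).mp h1
      linarith
    have hee : e = (s' - s) * q / d := by
      simp only [he, hτ, hτ', tauExp]; ring
    rw [hee, div_lt_iff₀ hd0]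
    nlinarith
  -- continuity/measurability helpers
  have hcont : Continuous fun x : ℝ => |x| ^ q :=
    (Real.continuous_rpow_const hq0.le).comp continuous_abs
  have hmq : Measurable fun x : ℝ => ENNReal.ofReal (|x| ^ q) :=
    (ENNReal.continuous_ofReal.comp hcont).measurable
  have hdens : Measurable fun x : ℝ => ENNReal.ofReal (Real.exp (-(|x| ^ q) / 2)) :=
    (ENNReal.continuous_ofReal.comp
      (Real.continuous_exp.comp ((hcont.neg).div_const 2))).measurable
  -- measurability of |ξ ℓ ·| ^ q
  have hmξq : ∀ ℓ, Measurable fun ω => ENNReal.ofReal (|ξ ℓ ω| ^ q) := fun ℓ =>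
    (ENNReal.continuous_ofReal.comp
      ((Real.continuous_rpow_const hq0.le).comp continuous_abs)).measurable.comp (hmeas ℓ)
  -- integrability of the density moment
  have hint : Integrable (fun x : ℝ => |x| ^ q * Real.exp (-(|x| ^ q) / 2)) := by
    have hIoi : IntegrableOn (fun x : ℝ => |x| ^ q * Real.exp (-(|x| ^ q) / 2)) (Set.Ioi 0) := by
      have := integrableOn_rpow_mul_exp_neg_mul_rpow (p := q) (s := q) (b := 1/2)
        (by linarith) hq0 (by norm_num)
      refine this.congr_fun (fun x hx => ?_) measurableSet_Ioi
      rw [abs_of_pos (Set.mem_Ioi.mp hx)]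
      ring_nf
    have hIic : IntegrableOn (fun x : ℝ => |x| ^ q * Real.exp (-(|x| ^ q) / 2)) (Set.Iic 0) := by
      rw [← Measure.map_neg_eq_self (volume : Measure ℝ)]
      have m : MeasurableEmbedding fun x : ℝ => -x := (Homeomorph.neg ℝ).measurableEmbedding
      rw [m.integrableOn_map_iff]
      simp_rw [Function.comp_def, abs_neg, Set.neg_preimage, Set.neg_Iic, neg_zero]
      exact Iff.mpr integrableOn_Ici_iff_integrableOn_Ioi hIoi
    have h := hIic.union hIoi
    rw [Set.Iic_union_Ioi] at h
    exact integrableOn_univ.mp h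
  -- the density moment lintegral is finite
  set J : ℝ≥0∞ := ∫⁻ x, ENNReal.ofReal (|x| ^ q * Real.exp (-(|x| ^ q) / 2)) with hJdef
  have hJ : J < ⊤ := by
    refine lt_of_le_of_lt ?_ hint.hasFiniteIntegral
    exact lintegral_mono fun x => Real.ofReal_le_enorm _
  -- `c` is finite
  have hν : (volume.withDensity fun x : ℝ =>
      ENNReal.ofReal (Real.exp (-(|x| ^ q) / 2))) Set.univ ≠ 0 := by
    rw [withDensity_apply _ MeasurableSet.univ, Measure.restrict_univ]
    have : 0 < ∫⁻ x : ℝ, ENNReal.ofReal (Real.exp (-(|x| ^ q) / 2)) := by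
      rw [lintegral_pos_iff_support hdens]
      have : (Function.support fun x : ℝ =>
          ENNReal.ofReal (Real.exp (-(|x| ^ q) / 2))) = Set.univ := by
        ext x
        simp [Function.mem_support, ENNReal.ofReal_eq_zero, not_le, Real.exp_pos]
      rw [this]
      simp
    exact this.ne'
  have hc : c ≠ ⊤ := by
    intro hcc
    have h1 : (Measure.map (ξ 0) P) Set.univ = 1 := by
      have : IsProbabilityMeasure (Measure.map (ξ 0) P) :=
        Measure.isProbabilityMeasure_map (hmeas 0).aemeasurable
      exact measure_univ
    rw [hlaw 0] at h1
    simp only [Measure.smul_apply, smul_eq_mul, hcc] at h1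
    rw [ENNReal.top_mul hν] at h1
    exact (by simp : (⊤ : ℝ≥0∞) ≠ 1) h1
  -- the moment of each ξ ℓ
  have hI : ∀ ℓ, ∫⁻ ω, ENNReal.ofReal (|ξ ℓ ω| ^ q) ∂P = c * J := by
    intro ℓ
    rw [← lintegral_map hmq (hmeas ℓ), hlaw ℓ, lintegral_smul_measure,
      lintegral_withDensity_eq_lintegral_mul _ hdens hmq]
    congr 1
    refine lintegral_congr fun x => ?_
    simp only [Pi.mul_apply]
    rw [← ENNReal.ofReal_mul (Real.exp_pos _).le]
    rw [mul_comm]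
  -- key pointwise identity
  have key : ∀ (ℓ : ℕ) (ω : Ω), ((ℓ : ℝ) + 1) ^ (τ' * q) * |u ℓ ω| ^ q
      = (κ⁻¹ * ((ℓ : ℝ) + 1) ^ e) * |ξ ℓ ω| ^ q := by
    intro ℓ ω
    have hl : (0 : ℝ) < (ℓ : ℝ) + 1 := by positivity
    have habs : |u ℓ ω| = κ ^ (-(1 / q)) * ((ℓ : ℝ) + 1) ^ (-τ) * |ξ ℓ ω| := by
      rw [hu, abs_mul, abs_mul, abs_of_pos (Real.rpow_pos_of_pos hκ _),
        abs_of_pos (Real.rpow_pos_of_pos hl _)]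
    have h1 : (κ ^ (-(1 / q))) ^ q = κ⁻¹ := by
      rw [← Real.rpow_mul hκ.le, show -(1 / q) * q = -1 by field_simp, Real.rpow_neg_one]
    have h2 : (((ℓ : ℝ) + 1) ^ (-τ)) ^ q = ((ℓ : ℝ) + 1) ^ (-(τ * q)) := by
      rw [← Real.rpow_mul hl.le]; ring_nf
    have h3 : ((ℓ : ℝ) + 1) ^ (τ' * q) * ((ℓ : ℝ) + 1) ^ (-(τ * q)) = ((ℓ : ℝ) + 1) ^ e := by
      rw [← Real.rpow_add hl, he]; ring_nf
    rw [habs, Real.mul_rpow (by positivity) (abs_nonneg _),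
      Real.mul_rpow (Real.rpow_pos_of_pos hκ _).le (Real.rpow_pos_of_pos hl _).le, h1, h2, ← h3]
    ring
  have hCnn : ∀ ℓ : ℕ, (0 : ℝ) ≤ κ⁻¹ * ((ℓ : ℝ) + 1) ^ e := fun ℓ => by positivity
  have hsum : Summable fun ℓ : ℕ => κ⁻¹ * ((ℓ : ℝ) + 1) ^ e := by
    apply Summable.mul_left
    have h := Real.summable_nat_rpow.mpr he1
    have h' := (summable_nat_add_iff 1).mpr h
    refine h'.congr fun n => ?_
    push_cast
    ring_nf
  have step1 : ∫⁻ ω, (∑' ℓ : ℕ, ENNReal.ofReal (((ℓ : ℝ) + 1) ^ (τ' * q) * |u ℓ ω| ^ q)) ∂P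
      = ∑' ℓ : ℕ, ENNReal.ofReal (κ⁻¹ * ((ℓ : ℝ) + 1) ^ e) * (c * J) := by
    have hpt : ∀ ω, (∑' ℓ : ℕ, ENNReal.ofReal (((ℓ : ℝ) + 1) ^ (τ' * q) * |u ℓ ω| ^ q))
        = ∑' ℓ : ℕ, ENNReal.ofReal (κ⁻¹ * ((ℓ : ℝ) + 1) ^ e) * ENNReal.ofReal (|ξ ℓ ω| ^ q) := by
      intro ω
      refine tsum_congr fun ℓ => ?_
      rw [key ℓ ω, ENNReal.ofReal_mul (hCnn ℓ)]
    calc ∫⁻ ω, (∑' ℓ : ℕ, ENNReal.ofReal (((ℓ : ℝ) + 1) ^ (τ' * q) * |u ℓ ω| ^ q)) ∂P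
        = ∫⁻ ω, (∑' ℓ : ℕ, ENNReal.ofReal (κ⁻¹ * ((ℓ : ℝ) + 1) ^ e)
            * ENNReal.ofReal (|ξ ℓ ω| ^ q)) ∂P := by
          exact lintegral_congr hpt
      _ = ∑' ℓ : ℕ, ∫⁻ ω, ENNReal.ofReal (κ⁻¹ * ((ℓ : ℝ) + 1) ^ e)
            * ENNReal.ofReal (|ξ ℓ ω| ^ q) ∂P := by
          exact lintegral_tsum fun ℓ => ((hmξq ℓ).const_mul _).aemeasurable
      _ = ∑' ℓ : ℕ, ENNReal.ofReal (κ⁻¹ * ((ℓ : ℝ) + 1) ^ e) * (c * J) := by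
          refine tsum_congr fun ℓ => ?_
          rw [lintegral_const_mul _ (hmξq ℓ), hI ℓ]
  rw [step1, ENNReal.tsum_mul_right]
  have hsfin : (∑' ℓ : ℕ, ENNReal.ofReal (κ⁻¹ * ((ℓ : ℝ) + 1) ^ e)) ≠ ⊤ := by
    rw [← ENNReal.ofReal_tsum_of_nonneg hCnn hsum]
    exact ENNReal.ofReal_ne_top
  exact ENNReal.mul_lt_top hsfin.lt_top (ENNReal.mul_lt_top hc.lt_top hJ)
end

section
/- Let 1 ≤ q ≤ 2, d ≥ 1, s, s' real with s' < s - d/q, and let (λ_{ℓ'})_{ℓ'≥1} be nonnegative reals with Σ_{ℓ'} λ_{ℓ'}^{q/2} < ∞ and λ* := sup_{ℓ'} λ_{ℓ'} < ∞. Let (χ_{ℓℓ'}) be i.i.d. χ²(1) random variables and define X = Σ_{ℓ=1}^∞ ℓ^{(s'-s)q/d} Σ_{ℓ'=1}^∞ λ_{ℓ'}^{q/2} χ_{ℓℓ'}. Then for every α with 0 < α < (λ*)^{-q/2}/2, one has E[exp(α X)] < ∞. -/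
open MeasureTheory ENNReal ProbabilityTheory

/-- The chi-squared distribution with one degree of freedom, as the law of the square of a
standard Gaussian random variable. -/
noncomputable def chiSq1 : Measure ℝ :=
  Measure.map (fun x : ℝ => x ^ 2) (gaussianReal 0 1)

namespace StmtAux

open Real

lemma ofReal_tsum_le {g : ℕ → ℝ} (hg : ∀ n, 0 ≤ g n) :
    ENNReal.ofReal (∑' n, g n) ≤ ∑' n, ENNReal.ofReal (g n) := by
  by_cases h : Summable g
  · rw [ENNReal.ofReal_tsum_of_nonneg hg h]
  · rw [tsum_eq_zero_of_not_summable h]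
    simp

lemma chiSq1_lintegral {t : ℝ} (ht : t < 1/2) :
    ∫⁻ x, ENNReal.ofReal (Real.exp (t * x)) ∂chiSq1
      = ENNReal.ofReal ((Real.sqrt (2 * π))⁻¹ * Real.sqrt (π / (1/2 - t))) := by
  have hb : (0:ℝ) < 1/2 - t := by linarith
  have hmf : Measurable fun x : ℝ => ENNReal.ofReal (Real.exp (t * x)) := by fun_prop
  have hmg : Measurable fun x : ℝ => x ^ 2 := by fun_prop
  rw [chiSq1, lintegral_map hmf hmg, gaussianReal_of_var_ne_zero 0 one_ne_zero,
    lintegral_withDensity_eq_lintegral_mul _ (measurable_gaussianPDF 0 1) (by fun_prop)]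
  have heq : ∀ x : ℝ, (gaussianPDF 0 1 * fun x => ENNReal.ofReal (Real.exp (t * x ^ 2))) x
      = ENNReal.ofReal ((Real.sqrt (2 * π))⁻¹ * Real.exp (-(1/2 - t) * x ^ 2)) := by
    intro x
    simp only [Pi.mul_apply, gaussianPDF]
    rw [← ENNReal.ofReal_mul (gaussianPDFReal_nonneg 0 1 x)]
    congr 1
    rw [gaussianPDFReal]
    simp only [NNReal.coe_one, mul_one, sub_zero]
    rw [mul_assoc, ← Real.exp_add]
    congr 1
    ring
  rw [lintegral_congr heq]
  have hInt : Integrable (fun x : ℝ => (Real.sqrt (2 * π))⁻¹ * Real.exp (-(1/2 - t) * x ^ 2)) :=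
    (integrable_exp_neg_mul_sq hb).const_mul _
  rw [← MeasureTheory.ofReal_integral_eq_lintegral_ofReal hInt
    (Filter.Eventually.of_forall fun x => by positivity)]
  rw [MeasureTheory.integral_const_mul, integral_gaussian]

lemma mgf_bound {t β : ℝ} (ht0 : 0 ≤ t) (htβ : t ≤ β) (hβ : β < 1/2) :
    (Real.sqrt (2 * π))⁻¹ * Real.sqrt (π / (1/2 - t)) ≤ Real.exp ((1 - 2*β)⁻¹ * t) := by
  have hb : (0:ℝ) < 1/2 - t := by linarith
  have hβ' : (0:ℝ) < 1 - 2*β := by linarith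
  have h2t : (0:ℝ) < 1 - 2*t := by linarith
  have hπ := Real.pi_pos
  have h1 : (Real.sqrt (2 * π))⁻¹ * Real.sqrt (π / (1/2 - t)) = Real.sqrt ((1 - 2*t)⁻¹) := by
    rw [inv_mul_eq_div, ← Real.sqrt_div (by positivity)]
    congr 1
    field_simp
  rw [h1]
  have h2 : (1 - 2*t)⁻¹ ≤ (Real.exp ((1 - 2*β)⁻¹ * t))^2 := by
    have hKβ : (1 - 2*β)⁻¹ * (1 - 2*β) = 1 := inv_mul_cancel₀ hβ'.ne'
    have hK0 : (0:ℝ) ≤ (1 - 2*β)⁻¹ := (inv_pos.mpr hβ').le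
    have h3 : (1:ℝ) ≤ (1 + 2*((1 - 2*β)⁻¹ * t)) * (1 - 2*t) := by
      nlinarith [mul_nonneg (mul_nonneg hK0 ht0) (sub_nonneg.mpr htβ)]
    have h4 : (1 - 2*t)⁻¹ ≤ 1 + 2*((1 - 2*β)⁻¹ * t) := by
      rw [inv_eq_one_div, div_le_iff₀ h2t]
      linarith
    have h5 : 1 + 2*((1 - 2*β)⁻¹ * t) ≤ Real.exp (2*((1 - 2*β)⁻¹ * t)) := by
      have := Real.add_one_le_exp (2*((1 - 2*β)⁻¹ * t))
      linarith
    have h6 : Real.exp (2*((1 - 2*β)⁻¹ * t)) = (Real.exp ((1 - 2*β)⁻¹ * t))^2 := by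
      rw [sq, ← Real.exp_add]
      ring_nf
    linarith [h4.trans (h5.trans_eq h6)]
  calc Real.sqrt ((1 - 2*t)⁻¹) ≤ Real.sqrt ((Real.exp ((1 - 2*β)⁻¹ * t))^2) :=
        Real.sqrt_le_sqrt h2
    _ = Real.exp ((1 - 2*β)⁻¹ * t) := Real.sqrt_sq (Real.exp_nonneg _)

end StmtAux

/-- Fernique-type exponential integrability: for
`X = Σ_ℓ ℓ^{(s'-s)q/d} Σ_{ℓ'} λ_{ℓ'}^{q/2} χ_{ℓℓ'}` with `(χ_{ℓℓ'})` i.i.d. `χ²(1)`,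
`s' < s - d/q`, `Σ λ^{q/2} < ∞` and `λ* = sup λ < ∞`, one has `E[exp(α X)] < ∞` for every
`0 < α < (λ*)^{-q/2}/2`. -/
theorem stmt2
    {Ω : Type*} [MeasurableSpace Ω] (P : Measure Ω) [IsProbabilityMeasure P]
    (q s s' d : ℝ) (hq1 : 1 ≤ q) (hq2 : q ≤ 2) (hd : 1 ≤ d) (hs' : s' < s - d / q)
    (lam : ℕ → ℝ) (hlam : ∀ ℓ', 0 ≤ lam ℓ')
    (hsum : Summable fun ℓ' => lam ℓ' ^ (q / 2))
    (lamSup : ℝ) (hlamSup : IsLUB (Set.range lam) lamSup)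
    (χ : ℕ × ℕ → Ω → ℝ) (hmeas : ∀ p, Measurable (χ p))
    (hindep : iIndepFun χ P)
    (hlaw : ∀ p, Measure.map (χ p) P = chiSq1)
    (X : Ω → ℝ)
    (hX : ∀ ω, X ω = ∑' ℓ : ℕ,
      ((ℓ : ℝ) + 1) ^ ((s' - s) * q / d) * ∑' ℓ' : ℕ, lam ℓ' ^ (q / 2) * χ (ℓ, ℓ') ω)
    (α : ℝ) (hα0 : 0 < α) (hα : α < lamSup ^ (-(q / 2)) / 2) :
    ∫⁻ ω, ENNReal.ofReal (Real.exp (α * X ω)) ∂P < ⊤ := by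
  classical
  have hq0 : (0:ℝ) < q := lt_of_lt_of_le one_pos hq1
  have hd0 : (0:ℝ) < d := lt_of_lt_of_le one_pos hd
  set e : ℝ := (s' - s) * q / d with he_def
  have he : e < -1 := by
    rw [he_def, div_lt_iff₀ hd0]
    have h2 : s' - s < -(d / q) := by linarith
    have h1 : (s' - s) * q < -d := by
      calc (s' - s) * q < (-(d/q)) * q := mul_lt_mul_of_pos_right h2 hq0
        _ = -d := by field_simp
    linarith
  set c : ℕ → ℝ := fun ℓ => ((ℓ:ℝ) + 1) ^ e with hc_def
  have hcpos : ∀ ℓ, 0 < c ℓ := fun ℓ => Real.rpow_pos_of_pos (by positivity) e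
  have hcle : ∀ ℓ, c ℓ ≤ 1 := fun ℓ =>
    Real.rpow_le_one_of_one_le_of_nonpos (by simp [Nat.cast_nonneg]) (by linarith)
  have hcsum : Summable c := by
    have h := (Real.summable_nat_rpow.mpr he).comp_injective (add_left_injective 1)
    refine h.congr fun n => ?_
    simp only [Function.comp_apply, hc_def]
    push_cast
    norm_num
  set a : ℕ → ℝ := fun ℓ' => lam ℓ' ^ (q / 2) with ha_def
  have ha0 : ∀ ℓ', 0 ≤ a ℓ' := fun ℓ' => Real.rpow_nonneg (hlam ℓ') _
  have hasum : Summable a := hsum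
  have hlam0 : 0 ≤ lamSup := le_trans (hlam 0) (hlamSup.1 (Set.mem_range_self 0))
  have hLpos : 0 < lamSup := by
    rcases hlam0.lt_or_eq with h | h
    · exact h
    · exfalso
      rw [← h, Real.zero_rpow (neg_ne_zero.mpr (by positivity))] at hα
      linarith
  set L : ℝ := lamSup ^ (q / 2) with hL_def
  have hL : 0 < L := Real.rpow_pos_of_pos hLpos _
  have ha_le : ∀ ℓ', a ℓ' ≤ L := fun ℓ' =>
    Real.rpow_le_rpow (hlam ℓ') (hlamSup.1 ⟨ℓ', rfl⟩) (by positivity)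
  set β : ℝ := α * L with hβ_def
  have hβlt : β < 1/2 := by
    have h1 : lamSup ^ (-(q/2)) = L⁻¹ := Real.rpow_neg hlam0 _
    rw [h1] at hα
    calc β = α * L := hβ_def
      _ < (L⁻¹/2) * L := mul_lt_mul_of_pos_right hα hL
      _ = 1/2 := by field_simp
  have hβ0 : 0 ≤ β := mul_nonneg hα0.le hL.le
  set t : ℕ × ℕ → ℝ := fun p => α * c p.1 * a p.2 with ht_def
  have ht0 : ∀ p, 0 ≤ t p := fun p =>
    mul_nonneg (mul_nonneg hα0.le (hcpos _).le) (ha0 _)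
  have htβ : ∀ p, t p ≤ β := by
    intro p
    calc t p = α * c p.1 * a p.2 := rfl
      _ ≤ α * 1 * a p.2 :=
        mul_le_mul_of_nonneg_right (mul_le_mul_of_nonneg_left (hcle _) hα0.le) (ha0 _)
      _ = α * a p.2 := by ring
      _ ≤ α * L := mul_le_mul_of_nonneg_left (ha_le _) hα0.le
  set K : ℝ := (1 - 2*β)⁻¹ with hK_def
  have hβ' : (0:ℝ) < 1 - 2*β := by linarith
  have hK0 : 0 ≤ K := (inv_pos.mpr hβ').le
  set M : ℝ := α * (∑' ℓ, c ℓ) * (∑' ℓ', a ℓ') with hM_def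
  set Y : ℕ × ℕ → Ω → ℝ := fun p ω => t p * χ p ω with hY_def
  have hYmeas : ∀ p, Measurable (Y p) := fun p => (hmeas p).const_mul _
  have hYindep : iIndepFun Y P :=
    hindep.comp (fun p x => t p * x) (fun p => measurable_id.const_mul _)
  set F : ℕ → Finset (ℕ × ℕ) := fun n => Finset.range n ×ˢ Finset.range n with hF_def
  have hFmono : ∀ {m n : ℕ}, m ≤ n → F m ⊆ F n := fun {m n} hmn =>
    Finset.product_subset_product (Finset.range_subset_range.mpr hmn) (Finset.range_subset_range.mpr hmn)
  set S : ℕ → Ω → ℝ := fun n ω => ∑ p ∈ F n, Y p ω with hS_def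
  -- single coordinate computations
  have hLp : ∀ p : ℕ × ℕ, ∫⁻ ω, ENNReal.ofReal (Real.exp (t p * χ p ω)) ∂P
      = ENNReal.ofReal ((Real.sqrt (2 * Real.pi))⁻¹ * Real.sqrt (Real.pi / (1/2 - t p))) := by
    intro p
    have h1 : ∫⁻ ω, ENNReal.ofReal (Real.exp (t p * χ p ω)) ∂P
        = ∫⁻ x, ENNReal.ofReal (Real.exp (t p * x)) ∂chiSq1 := by
      rw [← hlaw p, lintegral_map (by fun_prop) (hmeas p)]
    rw [h1, StmtAux.chiSq1_lintegral (lt_of_le_of_lt (htβ p) hβlt)]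
  have hIntp' : ∀ p : ℕ × ℕ, Integrable (fun ω => Real.exp (t p * χ p ω)) P := by
    intro p
    refine ⟨((hmeas p).const_mul _).exp.aestronglyMeasurable, ?_⟩
    rw [hasFiniteIntegral_iff_ofReal (Filter.Eventually.of_forall fun ω => (Real.exp_pos _).le)]
    rw [hLp p]
    exact ENNReal.ofReal_lt_top
  have hIntp : ∀ p : ℕ × ℕ, Integrable (fun ω => Real.exp (1 * Y p ω)) P := fun p =>
    (hIntp' p).congr (Filter.Eventually.of_forall fun ω => by simp [hY_def])
  have hmgf_le : ∀ p : ℕ × ℕ, mgf (Y p) P 1 ≤ Real.exp (K * t p) := by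
    intro p
    have hval : ∫ ω, Real.exp (t p * χ p ω) ∂P
        = (Real.sqrt (2 * Real.pi))⁻¹ * Real.sqrt (Real.pi / (1/2 - t p)) := by
      have h := MeasureTheory.ofReal_integral_eq_lintegral_ofReal (hIntp' p)
        (Filter.Eventually.of_forall fun ω => (Real.exp_pos _).le)
      rw [hLp p] at h
      have hnn1 : 0 ≤ ∫ ω, Real.exp (t p * χ p ω) ∂P :=
        integral_nonneg fun ω => (Real.exp_pos _).le
      have hnn2 : 0 ≤ (Real.sqrt (2 * Real.pi))⁻¹ * Real.sqrt (Real.pi / (1/2 - t p)) := by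
        positivity
      exact (ENNReal.ofReal_eq_ofReal_iff hnn1 hnn2).mp h
    have hmeq : mgf (Y p) P 1 = ∫ ω, Real.exp (t p * χ p ω) ∂P := by
      rw [mgf]
      exact integral_congr_ae (Filter.Eventually.of_forall fun ω => by simp [hY_def])
    rw [hmeq, hval]
    exact StmtAux.mgf_bound (ht0 p) (htβ p) hβlt
  -- uniform bound for finite sums
  have hsum_t : ∀ n, ∑ p ∈ F n, t p ≤ M := by
    intro n
    have hA : ∑ j ∈ Finset.range n, a j ≤ ∑' j, a j :=
      Summable.sum_le_tsum _ (fun j _ => ha0 j) hasum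
    have hC : ∑ i ∈ Finset.range n, c i ≤ ∑' i, c i :=
      Summable.sum_le_tsum _ (fun i _ => (hcpos i).le) hcsum
    have hAnn : 0 ≤ ∑ j ∈ Finset.range n, a j := Finset.sum_nonneg fun j _ => ha0 j
    have hCnn : 0 ≤ ∑ i ∈ Finset.range n, c i := Finset.sum_nonneg fun i _ => (hcpos i).le
    have hAnn' : 0 ≤ ∑' j, a j := tsum_nonneg ha0
    have heq : ∑ p ∈ F n, t p
        = (∑ i ∈ Finset.range n, α * c i) * (∑ j ∈ Finset.range n, a j) := by
      rw [Finset.sum_mul_sum, hF_def, Finset.sum_product]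
    rw [heq, hM_def, ← Finset.mul_sum]
    have h1 : α * (∑ i ∈ Finset.range n, c i) ≤ α * ∑' i, c i :=
      mul_le_mul_of_nonneg_left hC hα0.le
    exact mul_le_mul h1 hA hAnn (mul_nonneg hα0.le (tsum_nonneg fun i => (hcpos i).le))
  -- bound the lintegral of each partial sum
  have hgn : ∀ n, ∫⁻ ω, ENNReal.ofReal (Real.exp (S n ω)) ∂P
      ≤ ENNReal.ofReal (Real.exp (K * M)) := by
    intro n
    have hIntS : Integrable (fun ω => Real.exp (1 * (∑ p ∈ F n, Y p) ω)) P :=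
      hYindep.integrable_exp_mul_sum hYmeas (fun p _ => hIntp p)
    have h1 : ∫⁻ ω, ENNReal.ofReal (Real.exp (S n ω)) ∂P
        = ENNReal.ofReal (∫ ω, Real.exp (1 * (∑ p ∈ F n, Y p) ω) ∂P) := by
      rw [MeasureTheory.ofReal_integral_eq_lintegral_ofReal hIntS
        (Filter.Eventually.of_forall fun ω => (Real.exp_pos _).le)]
      refine lintegral_congr fun ω => ?_
      rw [hS_def]
      simp [Finset.sum_apply]
    rw [h1]
    apply ENNReal.ofReal_le_ofReal
    have h2 : ∫ ω, Real.exp (1 * (∑ p ∈ F n, Y p) ω) ∂P = mgf (∑ p ∈ F n, Y p) P 1 := by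
      rw [mgf]
    rw [h2, hYindep.mgf_sum hYmeas (F n)]
    calc ∏ p ∈ F n, mgf (Y p) P 1 ≤ ∏ p ∈ F n, Real.exp (K * t p) :=
          Finset.prod_le_prod (fun p _ => mgf_nonneg) (fun p _ => hmgf_le p)
      _ = Real.exp (∑ p ∈ F n, K * t p) := (Real.exp_sum _ _).symm
      _ = Real.exp (K * ∑ p ∈ F n, t p) := by rw [← Finset.mul_sum]
      _ ≤ Real.exp (K * M) :=
          Real.exp_le_exp.mpr (mul_le_mul_of_nonneg_left (hsum_t n) hK0)
  -- almost everywhere nonnegativity of the χ's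
  have hae : ∀ᵐ ω ∂P, ∀ p : ℕ × ℕ, 0 ≤ χ p ω := by
    rw [ae_all_iff]
    intro p
    rw [ae_iff]
    have h0 : {ω | ¬ 0 ≤ χ p ω} = χ p ⁻¹' Set.Iio 0 := by
      ext ω; simp [not_le]
    rw [h0, ← Measure.map_apply (hmeas p) measurableSet_Iio, hlaw p]
    rw [chiSq1, Measure.map_apply (by fun_prop) measurableSet_Iio]
    have : (fun x : ℝ => x ^ 2) ⁻¹' Set.Iio 0 = ∅ := by
      ext x
      simp [Set.mem_Iio, not_lt.mpr (sq_nonneg x)]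
    rw [this]
    simp
  -- pointwise bound by the supremum of the partial sums
  have hpt : ∀ᵐ ω ∂P, ENNReal.ofReal (Real.exp (α * X ω))
      ≤ ⨆ n, ENNReal.ofReal (Real.exp (S n ω)) := by
    filter_upwards [hae] with ω hω
    have hterm0 : ∀ p : ℕ × ℕ, 0 ≤ t p * χ p ω := fun p => mul_nonneg (ht0 p) (hω p)
    have hy0 : ∀ n, 0 ≤ S n ω := fun n => Finset.sum_nonneg fun p _ => hterm0 p
    have hymono : Monotone fun n => S n ω := fun m n hmn =>
      Finset.sum_le_sum_of_subset_of_nonneg (hFmono hmn) (fun p _ _ => hterm0 p)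
    set T : ℝ≥0∞ := ∑' p : ℕ × ℕ, ENNReal.ofReal (t p * χ p ω) with hT_def
    have hTsup : T = ⨆ n, ENNReal.ofReal (S n ω) := by
      have h1 : ∀ n, ENNReal.ofReal (S n ω) = ∑ p ∈ F n, ENNReal.ofReal (t p * χ p ω) :=
        fun n => ENNReal.ofReal_sum_of_nonneg fun p _ => hterm0 p
      have hcof : ∀ G : Finset (ℕ × ℕ), ∃ n, G ⊆ F n := by
        intro G
        refine ⟨(G.sup fun p => max p.1 p.2) + 1, fun p hp => ?_⟩
        have h2 := Finset.le_sup (f := fun p : ℕ × ℕ => max p.1 p.2) hp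
        simp only [hF_def, Finset.mem_product, Finset.mem_range]
        constructor
        · exact Nat.lt_succ_of_le (le_trans (le_max_left _ _) h2)
        · exact Nat.lt_succ_of_le (le_trans (le_max_right _ _) h2)
      rw [hT_def, ENNReal.tsum_eq_iSup_sum' F hcof]
      exact iSup_congr fun n => (h1 n).symm
    have hXleT : ENNReal.ofReal (α * X ω) ≤ T := by
      have hXω : α * X ω = ∑' ℓ, α * (c ℓ * ∑' ℓ', a ℓ' * χ (ℓ, ℓ') ω) := by
        rw [hX ω, ← tsum_mul_left]
      have hinner_nn : ∀ ℓ, 0 ≤ ∑' ℓ', a ℓ' * χ (ℓ, ℓ') ω := fun ℓ =>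
        tsum_nonneg fun ℓ' => mul_nonneg (ha0 ℓ') (hω (ℓ, ℓ'))
      rw [hXω]
      refine le_trans (StmtAux.ofReal_tsum_le fun ℓ =>
        mul_nonneg hα0.le (mul_nonneg (hcpos ℓ).le (hinner_nn ℓ))) ?_
      rw [hT_def, ENNReal.tsum_prod']
      refine ENNReal.tsum_le_tsum fun ℓ => ?_
      rw [ENNReal.ofReal_mul hα0.le, ENNReal.ofReal_mul (hcpos ℓ).le]
      calc ENNReal.ofReal α * (ENNReal.ofReal (c ℓ)
            * ENNReal.ofReal (∑' ℓ', a ℓ' * χ (ℓ, ℓ') ω))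
          ≤ ENNReal.ofReal α * (ENNReal.ofReal (c ℓ)
            * ∑' ℓ', ENNReal.ofReal (a ℓ' * χ (ℓ, ℓ') ω)) := by
            gcongr
            exact StmtAux.ofReal_tsum_le fun ℓ' => mul_nonneg (ha0 ℓ') (hω (ℓ, ℓ'))
        _ = ∑' ℓ', ENNReal.ofReal (t (ℓ, ℓ') * χ (ℓ, ℓ') ω) := by
            rw [ENNReal.tsum_mul_left.symm, ENNReal.tsum_mul_left.symm]
            refine tsum_congr fun ℓ' => ?_
            rw [← ENNReal.ofReal_mul (hcpos ℓ).le, ← ENNReal.ofReal_mul hα0.le]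
            congr 1
            simp only [ht_def]
            ring
    by_cases hT : T = ⊤
    · have h1 : ⨆ n, ENNReal.ofReal (S n ω) = ⊤ := by rw [← hTsup]; exact hT
      have h2 : (⊤ : ℝ≥0∞) ≤ ⨆ n, ENNReal.ofReal (Real.exp (S n ω)) := by
        rw [← h1]
        exact iSup_mono fun n =>
          ENNReal.ofReal_le_ofReal (by linarith [Real.add_one_le_exp (S n ω)])
      exact le_trans le_top h2
    · have hbdd : BddAbove (Set.range fun n => S n ω) := by
        refine ⟨T.toReal, ?_⟩
        rintro _ ⟨n, rfl⟩
        have h1 : ENNReal.ofReal (S n ω) ≤ T :=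
          hTsup ▸ le_iSup (fun n => ENNReal.ofReal (S n ω)) n
        calc S n ω = (ENNReal.ofReal (S n ω)).toReal := (ENNReal.toReal_ofReal (hy0 n)).symm
          _ ≤ T.toReal := ENNReal.toReal_mono hT h1
      have hy_le : ∀ n, S n ω ≤ ⨆ n, S n ω := fun n => le_ciSup hbdd n
      have hys0 : 0 ≤ ⨆ n, S n ω := le_trans (hy0 0) (hy_le 0)
      have hXle : α * X ω ≤ ⨆ n, S n ω := by
        have h1 : T ≤ ENNReal.ofReal (⨆ n, S n ω) := by
          rw [hTsup]
          exact iSup_le fun n => ENNReal.ofReal_le_ofReal (hy_le n)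
        exact (ENNReal.ofReal_le_ofReal_iff hys0).mp (le_trans hXleT h1)
      have htendy : Filter.Tendsto (fun n => S n ω) Filter.atTop (nhds (⨆ n, S n ω)) :=
        tendsto_atTop_ciSup hymono hbdd
      have htend : Filter.Tendsto (fun n => ENNReal.ofReal (Real.exp (S n ω))) Filter.atTop
          (nhds (ENNReal.ofReal (Real.exp (⨆ n, S n ω)))) :=
        (ENNReal.continuous_ofReal.tendsto _).comp ((Real.continuous_exp.tendsto _).comp htendy)
      have h2 : ENNReal.ofReal (Real.exp (⨆ n, S n ω))
          ≤ ⨆ n, ENNReal.ofReal (Real.exp (S n ω)) :=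
        le_of_tendsto' htend fun n => le_iSup (fun n => ENNReal.ofReal (Real.exp (S n ω))) n
      exact le_trans (ENNReal.ofReal_le_ofReal (Real.exp_le_exp.mpr hXle)) h2
  -- conclude by monotone convergence
  have hmeasg : ∀ n, AEMeasurable (fun ω => ENNReal.ofReal (Real.exp (S n ω))) P := by
    intro n
    have hSm : Measurable (S n) := by
      rw [hS_def]
      exact Finset.measurable_sum _ fun p _ => hYmeas p
    exact (hSm.exp.ennreal_ofReal).aemeasurable
  have hmono_ae : ∀ᵐ ω ∂P, Monotone fun n => ENNReal.ofReal (Real.exp (S n ω)) := by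
    filter_upwards [hae] with ω hω
    intro m n hmn
    apply ENNReal.ofReal_le_ofReal
    apply Real.exp_le_exp.mpr
    exact Finset.sum_le_sum_of_subset_of_nonneg (hFmono hmn)
      (fun p _ _ => mul_nonneg (ht0 p) (hω p))
  calc ∫⁻ ω, ENNReal.ofReal (Real.exp (α * X ω)) ∂P
      ≤ ∫⁻ ω, ⨆ n, ENNReal.ofReal (Real.exp (S n ω)) ∂P := lintegral_mono_ae hpt
    _ = ⨆ n, ∫⁻ ω, ENNReal.ofReal (Real.exp (S n ω)) ∂P := lintegral_iSup' hmeasg hmono_ae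
    _ ≤ ENNReal.ofReal (Real.exp (K * M)) := iSup_le hgn
    _ < ⊤ := ENNReal.ofReal_lt_top
end

section
/- Let 1 ≤ q ≤ 2, d ≥ 1, s, s' real with s' ≥ s - d/q, and let λ_{ℓ'} > 0 for at least one ℓ'. Let (χ_{ℓℓ'}) be i.i.d. χ²(1) random variables. Then X = Σ_{ℓ=1}^∞ ℓ^{(s'-s)q/d} Σ_{ℓ'=1}^∞ λ_{ℓ'}^{q/2} χ_{ℓℓ'} = ∞ almost surely. -/
open MeasureTheory ENNReal ProbabilityTheory

lemma integrable_sq_gaussian : Integrable (fun x : ℝ => x ^ 2) (gaussianReal 0 1) := by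
  rw [gaussianReal_of_var_ne_zero 0 one_ne_zero]
  rw [integrable_withDensity_iff (measurable_gaussianPDF 0 1)
    (Filter.Eventually.of_forall fun x => by simp [gaussianPDF_def])]
  have base : Integrable (fun x : ℝ => x ^ 2 * Real.exp (-(1/2) * x ^ 2)) := by
    have h := integrable_rpow_mul_exp_neg_mul_sq (b := 1/2) (by norm_num)
      (s := 2) (by norm_num)
    have : ∀ x : ℝ, x ^ (2:ℝ) = x ^ (2:ℕ) := fun x => by
      rw [show ((2:ℝ) = ((2:ℕ):ℝ)) by norm_num, Real.rpow_natCast]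
    simpa [this] using h
  have : Integrable (fun x : ℝ => (√(2 * Real.pi))⁻¹ *
      (x ^ 2 * Real.exp (-(1/2) * x ^ 2))) := base.const_mul _
  refine this.congr (Filter.Eventually.of_forall fun x => ?_)
  simp only [gaussianPDF_def, gaussianPDFReal]
  rw [ENNReal.toReal_ofReal (by positivity)]
  push_cast
  rw [show (-(x - 0) ^ 2 / (2 * (1:ℝ))) = (-(1/2) * x ^ 2) by ring]
  ring

lemma chiSq1_nonneg_ae : ∀ᵐ x ∂chiSq1, 0 ≤ x := by
  rw [chiSq1]
  rw [ae_map_iff (p := fun x : ℝ => 0 ≤ x) (continuous_pow 2).measurable.aemeasurable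
    measurableSet_Ici]
  exact Filter.Eventually.of_forall fun x => sq_nonneg x

lemma integrable_id_chiSq1 : Integrable id chiSq1 := by
  rw [chiSq1, integrable_map_measure aestronglyMeasurable_id
    (continuous_pow 2).measurable.aemeasurable]
  exact integrable_sq_gaussian

lemma chiSq1_mean_pos : 0 < ∫ x, x ∂chiSq1 := by
  have hmap : ∫ x, x ∂chiSq1 = ∫ x, x ^ 2 ∂(gaussianReal 0 1) := by
    rw [chiSq1]
    exact integral_map (f := fun x : ℝ => x) (continuous_pow 2).measurable.aemeasurable
      measurable_id.aestronglyMeasurable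
  rw [hmap]
  rw [integral_pos_iff_support_of_nonneg_ae (Filter.Eventually.of_forall fun x => sq_nonneg x)
    integrable_sq_gaussian]
  have hsupp : (Function.support fun x : ℝ => x ^ 2) = {(0:ℝ)}ᶜ := by
    ext x; simp [Function.support, pow_eq_zero_iff]
  rw [hsupp]
  have h0 : gaussianReal 0 1 {0} = 0 := by
    rw [gaussianReal_of_var_ne_zero 0 one_ne_zero]
    exact withDensity_absolutelyContinuous _ _ (measure_singleton 0)
  have : gaussianReal 0 1 {(0:ℝ)}ᶜ = 1 := by
    rw [measure_compl (measurableSet_singleton 0) (measure_ne_top _ _), h0, measure_univ]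
    simp
  rw [this]; exact one_pos

/-- Key deterministic lemma: if nonnegative reals have Cesàro average tending to a positive
limit, then the weighted series with weights `1/(ℓ+1)` diverges. -/
lemma tsum_div_eq_top {z : ℕ → ℝ} (hz : ∀ n, 0 ≤ z n) {m : ℝ} (hm : 0 < m)
    (hT : Filter.Tendsto (fun n : ℕ => (∑ i ∈ Finset.range n, z i) / n)
      Filter.atTop (nhds m)) :
    ∑' ℓ : ℕ, ENNReal.ofReal (z ℓ / ((ℓ : ℝ) + 1)) = ⊤ := by
  set T : ℕ → ℝ := fun n => ∑ i ∈ Finset.range n, z i with hTdef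
  set S : ℕ → ℝ := fun n => ∑ i ∈ Finset.range n, z i / ((i : ℝ) + 1) with hSdef
  -- limit along 2n
  have h2 : Filter.Tendsto (fun n : ℕ => 2 * n) Filter.atTop Filter.atTop :=
    Filter.tendsto_atTop_atTop.mpr fun b => ⟨b, fun a ha => by omega⟩
  have htwo : Filter.Tendsto (fun n : ℕ => T (2 * n) / ((2 * n : ℕ) : ℝ))
      Filter.atTop (nhds m) := hT.comp h2
  have hdiff : Filter.Tendsto
      (fun n : ℕ => T (2 * n) / ((2 * n : ℕ) : ℝ) - (1/2) * (T n / n))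
      Filter.atTop (nhds (m - (1/2) * m)) := htwo.sub (hT.const_mul _)
  have hev : ∀ᶠ n : ℕ in Filter.atTop,
      m / 4 < T (2 * n) / ((2 * n : ℕ) : ℝ) - (1/2) * (T n / n) :=
    hdiff.eventually (eventually_gt_nhds (by linarith))
  obtain ⟨N₁, hN₁⟩ := Filter.eventually_atTop.mp hev
  set N₀ := max N₁ 1 with hN₀def
  have hN₀1 : 1 ≤ N₀ := le_max_right _ _
  -- key step inequality
  have key : ∀ n, N₀ ≤ n → S n + m / 4 ≤ S (2 * n) := by
    intro n hn
    have hn1 : 1 ≤ n := le_trans hN₀1 hn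
    have hnR : (0:ℝ) < n := by exact_mod_cast hn1
    have hstep := hN₁ n (le_trans (le_max_left _ _) hn)
    have hTd : T (2 * n) - T n = ∑ i ∈ Finset.Ico n (2 * n), z i := by
      rw [Finset.sum_Ico_eq_sub _ (by omega)]
    have hSd : S (2 * n) - S n = ∑ i ∈ Finset.Ico n (2 * n), z i / ((i : ℝ) + 1) := by
      rw [Finset.sum_Ico_eq_sub _ (by omega)]
    have hbound : (T (2 * n) - T n) / ((2 * n : ℕ) : ℝ) ≤ S (2 * n) - S n := by
      rw [hTd, hSd, Finset.sum_div]
      refine Finset.sum_le_sum fun i hi => ?_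
      rw [Finset.mem_Ico] at hi
      have hi2 : (i : ℝ) + 1 ≤ ((2 * n : ℕ) : ℝ) := by
        have : i + 1 ≤ 2 * n := hi.2
        exact_mod_cast this
      exact div_le_div_of_nonneg_left (hz i) (by positivity) hi2
    have h2n : ((2 * n : ℕ) : ℝ) = 2 * (n : ℝ) := by push_cast; ring
    have harith : T (2 * n) / ((2 * n : ℕ) : ℝ) - (1/2) * (T n / n)
        = (T (2 * n) - T n) / ((2 * n : ℕ) : ℝ) := by
      rw [h2n]
      field_simp
    rw [harith] at hstep
    linarith
  -- iterate
  have iter : ∀ k : ℕ, S N₀ + k * (m / 4) ≤ S (2 ^ k * N₀) := by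
    intro k
    induction k with
    | zero => simp
    | succ k ih =>
      have hle : N₀ ≤ 2 ^ k * N₀ := Nat.le_mul_of_pos_left _ (Nat.pow_pos (by norm_num))
      have := key (2 ^ k * N₀) hle
      have heq : 2 * (2 ^ k * N₀) = 2 ^ (k + 1) * N₀ := by ring
      rw [heq] at this
      push_cast
      push_cast at ih
      linarith
  -- partial sums are unbounded
  have hub : ∀ C : ℝ, ∃ N : ℕ, C ≤ S N := by
    intro C
    obtain ⟨k, hk⟩ := exists_nat_ge ((C - S N₀) / (m / 4))
    refine ⟨2 ^ k * N₀, le_trans ?_ (iter k)⟩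
    have : C - S N₀ ≤ k * (m / 4) := by
      rw [div_le_iff₀ (by linarith)] at hk
      linarith
    linarith
  -- conclude
  refine ENNReal.eq_top_of_forall_nnreal_le fun r => ?_
  obtain ⟨N, hN⟩ := hub r
  calc (r : ℝ≥0∞) = ENNReal.ofReal r := ENNReal.ofReal_coe_nnreal.symm
    _ ≤ ENNReal.ofReal (S N) := ENNReal.ofReal_le_ofReal hN
    _ = ∑ i ∈ Finset.range N, ENNReal.ofReal (z i / ((i : ℝ) + 1)) := by
        rw [hSdef, ENNReal.ofReal_sum_of_nonneg]
        intro i _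
        have := hz i
        positivity
    _ ≤ ∑' ℓ : ℕ, ENNReal.ofReal (z ℓ / ((ℓ : ℝ) + 1)) := ENNReal.sum_le_tsum _

/-- Divergence part of the Fernique-type theorem: if `s' ≥ s - d/q` and at least one `λ_{ℓ'}`
is positive, then `X = Σ_ℓ ℓ^{(s'-s)q/d} Σ_{ℓ'} λ_{ℓ'}^{q/2} χ_{ℓℓ'} = ∞` almost surely, where
the `χ_{ℓℓ'}` are i.i.d. `χ²(1)`. -/
theorem stmt3
    {Ω : Type*} [MeasurableSpace Ω] (P : Measure Ω) [IsProbabilityMeasure P]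
    (q s s' d : ℝ) (hq1 : 1 ≤ q) (hq2 : q ≤ 2) (hd : 1 ≤ d) (hs' : s - d / q ≤ s')
    (lam : ℕ → ℝ) (hlam : ∀ ℓ', 0 ≤ lam ℓ') (hpos : ∃ ℓ', 0 < lam ℓ')
    (χ : ℕ × ℕ → Ω → ℝ) (hmeas : ∀ p, Measurable (χ p))
    (hindep : iIndepFun χ P)
    (hlaw : ∀ p, Measure.map (χ p) P = chiSq1) :
    ∀ᵐ ω ∂P,
      (∑' ℓ : ℕ, ENNReal.ofReal (((ℓ : ℝ) + 1) ^ ((s' - s) * q / d)) *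
        ∑' ℓ' : ℕ, ENNReal.ofReal (lam ℓ' ^ (q / 2)) * ENNReal.ofReal (χ (ℓ, ℓ') ω)) = ⊤ := by
  obtain ⟨ℓ₀, hℓ₀⟩ := hpos
  have hq0 : (0:ℝ) < q := lt_of_lt_of_le one_pos hq1
  have hd0 : (0:ℝ) < d := lt_of_lt_of_le one_pos hd
  set Z : ℕ → Ω → ℝ := fun ℓ => χ (ℓ, ℓ₀) with hZdef
  -- integrability of Z 0
  have hint : Integrable (Z 0) P := by
    have := integrable_id_chiSq1
    rw [← hlaw (0, ℓ₀), integrable_map_measure aestronglyMeasurable_id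
      (hmeas (0, ℓ₀)).aemeasurable] at this
    exact this
  -- pairwise independence
  have hpind : Pairwise (Function.onFun (IndepFun · · P) Z) := by
    intro i j hij
    exact hindep.indepFun (by simp [hij] : (i, ℓ₀) ≠ (j, ℓ₀))
  -- identical distribution
  have hident : ∀ i, IdentDistrib (Z i) (Z 0) P P := fun i =>
    ⟨(hmeas _).aemeasurable, (hmeas _).aemeasurable, by rw [hlaw, hlaw]⟩
  -- mean
  have hmean : P[Z 0] = ∫ x, x ∂chiSq1 := by
    rw [← hlaw (0, ℓ₀)]
    exact (integral_map (f := fun x : ℝ => x) (hmeas (0, ℓ₀)).aemeasurable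
      measurable_id.aestronglyMeasurable).symm
  have hslln := strong_law_ae_real Z hint hpind hident
  rw [hmean] at hslln
  -- nonnegativity a.s.
  have hnn : ∀ᵐ ω ∂P, ∀ ℓ, 0 ≤ Z ℓ ω := by
    rw [ae_all_iff]
    intro ℓ
    have h := chiSq1_nonneg_ae
    rw [← hlaw (ℓ, ℓ₀)] at h
    exact (ae_map_iff (p := fun x : ℝ => 0 ≤ x) (hmeas (ℓ, ℓ₀)).aemeasurable
      measurableSet_Ici).1 h
  filter_upwards [hslln, hnn] with ω hω hωnn
  -- exponent bound
  have hexp : (-1:ℝ) ≤ (s' - s) * q / d := by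
    have h1 : -(d / q) ≤ s' - s := by linarith
    have h2 : -(d / q) * (q / d) ≤ (s' - s) * (q / d) :=
      mul_le_mul_of_nonneg_right h1 (by positivity)
    have h3 : -(d / q) * (q / d) = -1 := by
      field_simp
    rw [h3] at h2
    rw [mul_div_assoc]
    exact h2
  set c₀ : ℝ≥0∞ := ENNReal.ofReal (lam ℓ₀ ^ (q / 2)) with hc₀def
  have hc₀ : c₀ ≠ 0 := by
    rw [hc₀def]
    simp only [ne_eq, ENNReal.ofReal_eq_zero, not_le]
    exact Real.rpow_pos_of_pos hℓ₀ _
  -- per-term lower bound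
  have hterm : ∀ ℓ : ℕ, c₀ * ENNReal.ofReal (Z ℓ ω / ((ℓ : ℝ) + 1)) ≤
      ENNReal.ofReal (((ℓ : ℝ) + 1) ^ ((s' - s) * q / d)) *
        ∑' ℓ' : ℕ, ENNReal.ofReal (lam ℓ' ^ (q / 2)) * ENNReal.ofReal (χ (ℓ, ℓ') ω) := by
    intro ℓ
    have hw : ENNReal.ofReal (((ℓ : ℝ) + 1)⁻¹) ≤
        ENNReal.ofReal (((ℓ : ℝ) + 1) ^ ((s' - s) * q / d)) := by
      apply ENNReal.ofReal_le_ofReal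
      calc ((ℓ : ℝ) + 1)⁻¹ = ((ℓ : ℝ) + 1) ^ (-1:ℝ) := (Real.rpow_neg_one _).symm
        _ ≤ _ := Real.rpow_le_rpow_of_exponent_le (by push_cast; linarith [Nat.cast_nonneg (α := ℝ) ℓ]) hexp
    have hinner : c₀ * ENNReal.ofReal (Z ℓ ω) ≤
        ∑' ℓ' : ℕ, ENNReal.ofReal (lam ℓ' ^ (q / 2)) * ENNReal.ofReal (χ (ℓ, ℓ') ω) :=
      ENNReal.le_tsum ℓ₀
    calc c₀ * ENNReal.ofReal (Z ℓ ω / ((ℓ : ℝ) + 1))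
        = ENNReal.ofReal (((ℓ : ℝ) + 1)⁻¹) * (c₀ * ENNReal.ofReal (Z ℓ ω)) := by
          rw [div_eq_inv_mul, ENNReal.ofReal_mul (by positivity)]
          ring
      _ ≤ _ := mul_le_mul' hw hinner
  -- total lower bound
  have hsum : c₀ * ∑' ℓ : ℕ, ENNReal.ofReal (Z ℓ ω / ((ℓ : ℝ) + 1)) ≤
      ∑' ℓ : ℕ, ENNReal.ofReal (((ℓ : ℝ) + 1) ^ ((s' - s) * q / d)) *
        ∑' ℓ' : ℕ, ENNReal.ofReal (lam ℓ' ^ (q / 2)) * ENNReal.ofReal (χ (ℓ, ℓ') ω) := by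
    rw [← ENNReal.tsum_mul_left]
    exact ENNReal.tsum_le_tsum hterm
  have hdiv : ∑' ℓ : ℕ, ENNReal.ofReal (Z ℓ ω / ((ℓ : ℝ) + 1)) = ⊤ :=
    tsum_div_eq_top hωnn chiSq1_mean_pos hω
  rw [hdiv, ENNReal.mul_top hc₀] at hsum
  exact top_le_iff.mp hsum
end

section
/- Let Φ satisfy |Φ(u₁;y) - Φ(u₂;y)| ≤ L‖u₁-u₂‖ for all y, and let p_u = exp(-Φ(u;·)) be densities with respect to Q₀. Then the squared Hellinger distance satisfies 2 d_H²(p_u, p_{u'}) = ∫ (1 - exp((Φ(u;y) - Φ(u';y))/2))² p_u dQ₀ ≤ (e^{L‖u-u'‖/2} - 1)², and hence d_H(p_u, p_{u'}) ≤ C L ‖u - u'‖ for ‖u-u'‖ bounded, for an absolute constant C. -/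
open MeasureTheory

lemma stmt17_key (x c : ℝ) (hx : |x| ≤ c) :
    (1 - Real.exp x) ^ 2 ≤ (Real.exp c - 1) ^ 2 := by
  have h1 : x ≤ c := le_trans (le_abs_self x) hx
  have h2 : -c ≤ x := by have := neg_abs_le x; linarith
  have hE := Real.exp_le_exp.mpr h1
  have hF : Real.exp (-x) ≤ Real.exp c := Real.exp_le_exp.mpr (by linarith)
  have hprod : Real.exp x * Real.exp (-x) = 1 := by
    rw [← Real.exp_add]; simp
  have hpos := Real.exp_pos x
  have hpos' := Real.exp_pos (-x)
  apply sq_le_sq'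
  · linarith
  · nlinarith [sq_nonneg (Real.exp x - 1)]

/-- Lipschitz continuity of the potential in the parameter yields Lipschitz control of the
Hellinger distance between the likelihoods: `2 d_H²(p_u, p_{u'}) ≤ (e^{L‖u-u'‖/2} - 1)²`, and
hence `d_H(p_u, p_{u'}) ≤ C L ‖u - u'‖` on bounded sets, for densities
`p_u = exp(-Φ(u;·))` w.r.t. a common σ-finite measure `Q₀`. -/
theorem stmt17
    {E : Type*} [NormedAddCommGroup E]
    {Y : Type*} [MeasurableSpace Y] (Q₀ : Measure Y) [SigmaFinite Q₀]
    (Φ : E → Y → ℝ) (hΦmeas : ∀ u, Measurable (Φ u))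
    (L : ℝ) (hL : 0 < L)
    (hLip : ∀ (u₁ u₂ : E) (y : Y), |Φ u₁ y - Φ u₂ y| ≤ L * ‖u₁ - u₂‖)
    (hint : ∀ u : E, Integrable (fun y => Real.exp (-Φ u y)) Q₀)
    (hprob : ∀ u : E, ∫ y, Real.exp (-Φ u y) ∂Q₀ = 1) :
    (∀ u u' : E,
      ∫ y, (1 - Real.exp ((Φ u y - Φ u' y) / 2)) ^ 2 * Real.exp (-Φ u y) ∂Q₀
        ≤ (Real.exp (L * ‖u - u'‖ / 2) - 1) ^ 2) ∧
    (∀ B : ℝ, 0 < B → ∃ C : ℝ, 0 < C ∧ ∀ u u' : E, ‖u - u'‖ ≤ B →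
      Real.sqrt ((1 / 2) *
          ∫ y, (Real.sqrt (Real.exp (-Φ u y)) - Real.sqrt (Real.exp (-Φ u' y))) ^ 2 ∂Q₀)
        ≤ C * L * ‖u - u'‖) := by
  have main : ∀ u u' : E,
      ∫ y, (1 - Real.exp ((Φ u y - Φ u' y) / 2)) ^ 2 * Real.exp (-Φ u y) ∂Q₀
        ≤ (Real.exp (L * ‖u - u'‖ / 2) - 1) ^ 2 := by
    intro u u'
    set M := (Real.exp (L * ‖u - u'‖ / 2) - 1) ^ 2 with hM
    have hptle : ∀ y, (1 - Real.exp ((Φ u y - Φ u' y) / 2)) ^ 2 ≤ M := by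
      intro y
      apply stmt17_key
      rw [abs_div, abs_two]
      have := hLip u u' y
      linarith
    have hle : ∀ y, (1 - Real.exp ((Φ u y - Φ u' y) / 2)) ^ 2 * Real.exp (-Φ u y)
        ≤ M * Real.exp (-Φ u y) := fun y =>
      mul_le_mul_of_nonneg_right (hptle y) (Real.exp_pos _).le
    calc ∫ y, (1 - Real.exp ((Φ u y - Φ u' y) / 2)) ^ 2 * Real.exp (-Φ u y) ∂Q₀
        ≤ ∫ y, M * Real.exp (-Φ u y) ∂Q₀ := by
          apply integral_mono_of_nonneg
          · exact Filter.Eventually.of_forall fun y =>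
              mul_nonneg (sq_nonneg _) (Real.exp_pos _).le
          · exact (hint u).const_mul M
          · exact Filter.Eventually.of_forall hle
      _ = M * ∫ y, Real.exp (-Φ u y) ∂Q₀ := integral_const_mul _ _
      _ = M := by rw [hprob u, mul_one]
  refine ⟨main, fun B hB => ⟨Real.exp (L * B / 2), Real.exp_pos _, fun u u' hr => ?_⟩⟩
  have heq : ∀ y, (Real.sqrt (Real.exp (-Φ u y)) - Real.sqrt (Real.exp (-Φ u' y))) ^ 2
      = (1 - Real.exp ((Φ u y - Φ u' y) / 2)) ^ 2 * Real.exp (-Φ u y) := by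
    intro y
    rw [← Real.exp_half, ← Real.exp_half]
    have h1 : Real.exp (-Φ u' y / 2)
        = Real.exp (-Φ u y / 2) * Real.exp ((Φ u y - Φ u' y) / 2) := by
      rw [← Real.exp_add]; ring_nf
    have h2 : Real.exp (-Φ u y) = Real.exp (-Φ u y / 2) * Real.exp (-Φ u y / 2) := by
      rw [← Real.exp_add]; ring_nf
    rw [h1, h2]; ring
  have hint_eq : ∫ y, (Real.sqrt (Real.exp (-Φ u y)) - Real.sqrt (Real.exp (-Φ u' y))) ^ 2 ∂Q₀
      = ∫ y, (1 - Real.exp ((Φ u y - Φ u' y) / 2)) ^ 2 * Real.exp (-Φ u y) ∂Q₀ :=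
    integral_congr_ae (Filter.Eventually.of_forall heq)
  rw [hint_eq]
  set r := ‖u - u'‖ with hrdef
  have hr0 : 0 ≤ r := norm_nonneg _
  set c := L * r / 2 with hc
  have hc0 : 0 ≤ c := by positivity
  have hI := main u u'
  have hM0 : (0:ℝ) ≤ (Real.exp c - 1) ^ 2 := sq_nonneg _
  have h1expc : 1 ≤ Real.exp c := Real.one_le_exp hc0
  calc Real.sqrt ((1/2) * ∫ y, (1 - Real.exp ((Φ u y - Φ u' y) / 2)) ^ 2 * Real.exp (-Φ u y) ∂Q₀)
      ≤ Real.sqrt ((Real.exp c - 1) ^ 2) := Real.sqrt_le_sqrt (by linarith)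
    _ = Real.exp c - 1 := Real.sqrt_sq (by linarith)
    _ ≤ Real.exp (L * B / 2) * L * r := by
        have hprod : Real.exp c * Real.exp (-c) = 1 := by rw [← Real.exp_add]; simp
        have hle1 : 1 - c ≤ Real.exp (-c) := by
          have := Real.add_one_le_exp (-c); linarith
        have h3 : Real.exp c - 1 ≤ c * Real.exp c := by
          nlinarith [Real.exp_pos c, Real.exp_pos (-c)]
        have h4 : Real.exp c ≤ Real.exp (L * B / 2) :=
          Real.exp_le_exp.mpr (by rw [hc]; nlinarith)
        nlinarith [Real.exp_pos (L * B / 2)]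
end
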